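/- arXiv:2307.08977 — 2 statements merged into one kernel-verified Lean document; each statement's English description precedes it below -/
import Mathlib

section
/- For every n ∈ ℕ with n ≥ 1 there exist signs ε_k ∈ {−1, 1}, k = 1,…,n, such that ‖Σ_{k=1}^n ε_k e^{2πikx}‖_{L^∞([0,1])} ≤ 5·n^{1/2}. -/
open MeasureTheory Real Filter Set
open scoped ENNReal Topology

noncomputable section

/-- The character `e2 m x = e^{2πimx}`. -/
def e2 (m : ℤ) (x : ℝ) : ℂ := Complex.exp (2 * π * Complex.I * m * x)

namespace RSaux

lemma e2_norm (m : ℤ) (x : ℝ) : ‖e2 m x‖ = 1 := by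
  have h : (2 * π * Complex.I * m * x : ℂ) = ((2 * π * m * x : ℝ) : ℂ) * Complex.I := by
    push_cast; ring
  rw [e2, h]
  exact Complex.norm_exp_ofReal_mul_I _

lemma e2_add (j k : ℤ) (x : ℝ) : e2 (j + k) x = e2 j x * e2 k x := by
  rw [e2, e2, e2, ← Complex.exp_add]
  congr 1
  push_cast
  ring

lemma e2_zero (x : ℝ) : e2 0 x = 1 := by
  simp [e2]

/-- Rudin–Shapiro coefficient pairs at level `m`. -/
def rs : ℕ → ℕ → ℝ × ℝ
  | 0, _ => (1, 1)
  | (m+1), k =>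
      if k < 2^m then ((rs m k).1, (rs m k).1)
      else ((rs m (k - 2^m)).2, -((rs m (k - 2^m)).2))

lemma rs_mem : ∀ m k, ((rs m k).1 = 1 ∨ (rs m k).1 = -1) ∧
    ((rs m k).2 = 1 ∨ (rs m k).2 = -1) := by
  intro m
  induction m with
  | zero => intro k; simp [rs]
  | succ m ih =>
      intro k
      by_cases h : k < 2^m
      · simp only [rs, if_pos h]
        exact ⟨(ih k).1, (ih k).1⟩
      · simp only [rs, if_neg h]
        rcases (ih (k - 2^m)).2 with h2 | h2 <;> simp [h2]

def Sa (m r : ℕ) (x : ℝ) : ℂ := ∑ k ∈ Finset.range r, ((rs m k).1 : ℂ) * e2 (k : ℤ) x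
def Sb (m r : ℕ) (x : ℝ) : ℂ := ∑ k ∈ Finset.range r, ((rs m k).2 : ℂ) * e2 (k : ℤ) x

lemma Sa_succ_low {m r : ℕ} (h : r ≤ 2^m) (x : ℝ) : Sa (m+1) r x = Sa m r x := by
  refine Finset.sum_congr rfl fun k hk => ?_
  have hk' : k < 2^m := lt_of_lt_of_le (Finset.mem_range.mp hk) h
  simp [rs, if_pos hk']

lemma Sb_succ_low {m r : ℕ} (h : r ≤ 2^m) (x : ℝ) : Sb (m+1) r x = Sa m r x := by
  refine Finset.sum_congr rfl fun k hk => ?_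
  have hk' : k < 2^m := lt_of_lt_of_le (Finset.mem_range.mp hk) h
  simp [rs, if_pos hk']

lemma Sa_succ_high (m s : ℕ) (x : ℝ) :
    Sa (m+1) (2^m + s) x = Sa m (2^m) x + e2 (2^m : ℤ) x * Sb m s x := by
  rw [Sa, Finset.sum_range_add]
  congr 1
  · refine Finset.sum_congr rfl fun k hk => ?_
    have hk' : k < 2^m := Finset.mem_range.mp hk
    simp [rs, if_pos hk']
  · rw [Sb, Finset.mul_sum]
    refine Finset.sum_congr rfl fun i hi => ?_
    have hni : ¬ (2^m + i < 2^m) := by omega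
    have hsub : 2^m + i - 2^m = i := by omega
    have he : e2 ((2^m + i : ℕ) : ℤ) x = e2 ((2^m : ℕ) : ℤ) x * e2 (i : ℤ) x := by
      rw [← e2_add]; norm_num
    simp only [rs, if_neg hni, hsub, he]
    push_cast
    ring

lemma Sb_succ_high (m s : ℕ) (x : ℝ) :
    Sb (m+1) (2^m + s) x = Sa m (2^m) x - e2 (2^m : ℤ) x * Sb m s x := by
  rw [Sb, Finset.sum_range_add, sub_eq_add_neg]
  congr 1
  · refine Finset.sum_congr rfl fun k hk => ?_
    have hk' : k < 2^m := Finset.mem_range.mp hk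
    simp [rs, if_pos hk']
  · rw [Sb, Finset.mul_sum, ← Finset.sum_neg_distrib]
    refine Finset.sum_congr rfl fun i hi => ?_
    have hni : ¬ (2^m + i < 2^m) := by omega
    have hsub : 2^m + i - 2^m = i := by omega
    have he : e2 ((2^m + i : ℕ) : ℤ) x = e2 ((2^m : ℕ) : ℤ) x * e2 (i : ℤ) x := by
      rw [← e2_add]; norm_num
    simp only [rs, if_neg hni, hsub, he]
    push_cast
    ring

lemma full_sq (m : ℕ) (x : ℝ) :
    ‖Sa m (2^m) x‖^2 + ‖Sb m (2^m) x‖^2 = 2^(m+1) := by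
  induction m with
  | zero =>
      simp [Sa, Sb, rs, e2_zero]
      norm_num
  | succ m ih =>
      have hsplit : (2:ℕ)^(m+1) = 2^m + 2^m := by rw [pow_succ]; omega
      rw [hsplit, Sa_succ_high, Sb_succ_high]
      set P := Sa m (2^m) x
      set Q' := e2 (2^m : ℤ) x * Sb m (2^m) x
      have hQ' : ‖Q'‖ = ‖Sb m (2^m) x‖ := by
        rw [norm_mul, e2_norm, one_mul]
      have par := parallelogram_law_with_norm ℝ P Q'
      have hpar : ‖P + Q'‖^2 + ‖P - Q'‖^2 = 2 * (‖P‖^2 + ‖Q'‖^2) := by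
        simpa [sq] using par
      rw [hpar, hQ', ih]
      ring

lemma full_bound (m : ℕ) (x : ℝ) :
    ‖Sa m (2^m) x‖ ≤ Real.sqrt 2 * Real.sqrt (2^m) := by
  have h := full_sq m x
  have hp : (2:ℝ)^(m+1) = 2 * 2^m := by ring
  have h2 : ‖Sa m (2^m) x‖^2 ≤ 2 * 2^m := by
    nlinarith [sq_nonneg ‖Sb m (2^m) x‖]
  have h3 := Real.sqrt_le_sqrt h2
  rwa [Real.sqrt_sq (norm_nonneg _), Real.sqrt_mul (by norm_num : (0:ℝ) ≤ 2)] at h3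

lemma sqrt_ineq {A s : ℝ} (hs : 0 ≤ s) (hsA : s ≤ A) :
    Real.sqrt 2 * Real.sqrt A + 5 * Real.sqrt s ≤ 5 * Real.sqrt (A + s) := by
  have hA : 0 ≤ A := le_trans hs hsA
  set u := Real.sqrt A
  set v := Real.sqrt s
  set w := Real.sqrt (A + s)
  have hu : u^2 = A := Real.sq_sqrt hA
  have hv : v^2 = s := Real.sq_sqrt hs
  have hw : w^2 = A + s := Real.sq_sqrt (by linarith)
  have hu0 : 0 ≤ u := Real.sqrt_nonneg _
  have hv0 : 0 ≤ v := Real.sqrt_nonneg _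
  have hw0 : 0 ≤ w := Real.sqrt_nonneg _
  have hvu : v ≤ u := Real.sqrt_le_sqrt hsA
  have ht : Real.sqrt 2 ≤ 1.5 := by
    nlinarith [Real.sq_sqrt (by norm_num : (0:ℝ) ≤ 2), Real.sqrt_nonneg 2]
  have ht0 : 0 ≤ Real.sqrt 2 := Real.sqrt_nonneg 2
  have key : (Real.sqrt 2 * u + 5 * v)^2 ≤ (5 * w)^2 := by
    have h2 : (Real.sqrt 2)^2 = 2 := Real.sq_sqrt (by norm_num)
    nlinarith [mul_nonneg hu0 hv0, mul_le_mul_of_nonneg_right hvu hv0,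
      mul_le_mul_of_nonneg_right ht hu0, sq_nonneg (u - v)]
  have h4 := Real.sqrt_le_sqrt key
  rwa [Real.sqrt_sq (by positivity), Real.sqrt_sq (by positivity)] at h4

lemma main_bound : ∀ m, ∀ r ≤ 2^m, ∀ x : ℝ,
    ‖Sa m r x‖ ≤ 5 * Real.sqrt r ∧ ‖Sb m r x‖ ≤ 5 * Real.sqrt r := by
  intro m
  induction m with
  | zero =>
      intro r hr x
      interval_cases r
      · simp [Sa, Sb]
      · have h1 : ‖(1:ℂ)‖ ≤ 5 * Real.sqrt 1 := by
          rw [Real.sqrt_one]; norm_num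
        constructor <;>
          · rcases (rs_mem 0 0).1 with h | h <;> rcases (rs_mem 0 0).2 with h' | h' <;>
              simp [Sa, Sb, rs, e2_zero, Real.sqrt_one]
  | succ m ih =>
      intro r hr x
      by_cases h : r ≤ 2^m
      · rw [Sa_succ_low h, Sb_succ_low h]
        exact ⟨(ih r h x).1, (ih r h x).1⟩
      · push_neg at h
        obtain ⟨s, rfl⟩ : ∃ s, r = 2^m + s := ⟨r - 2^m, by omega⟩
        have hs : s ≤ 2^m := by
          have : (2:ℕ)^(m+1) = 2^m + 2^m := by rw [pow_succ]; omega
          omega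
        have hb := (ih s hs x).2
        have hfull := full_bound m x
        have hcast : ((2^m + s : ℕ) : ℝ) = ((2:ℝ)^m) + (s : ℝ) := by push_cast; ring
        have harith : Real.sqrt 2 * Real.sqrt (2^m) + 5 * Real.sqrt (s : ℕ) ≤
            5 * Real.sqrt ((2^m + s : ℕ) : ℝ) := by
          rw [hcast]
          exact sqrt_ineq (by positivity) (by
            calc (s:ℝ) ≤ ((2^m : ℕ) : ℝ) := by exact_mod_cast hs
            _ = (2:ℝ)^m := by push_cast; ring)
        have hcomb : ∀ z : ℂ, ‖z‖ ≤ ‖Sa m (2^m) x‖ + ‖Sb m s x‖ →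
            ‖z‖ ≤ 5 * Real.sqrt ((2^m + s : ℕ) : ℝ) := by
          intro z hz
          calc ‖z‖ ≤ ‖Sa m (2^m) x‖ + ‖Sb m s x‖ := hz
            _ ≤ Real.sqrt 2 * Real.sqrt (2^m) + 5 * Real.sqrt (s : ℕ) := by
                refine add_le_add ?_ hb
                have : Real.sqrt ((2^m : ℕ) : ℝ) = Real.sqrt ((2:ℝ)^m) := by
                  congr 1; push_cast; ring
                simpa using hfull
            _ ≤ 5 * Real.sqrt ((2^m + s : ℕ) : ℝ) := harith
        constructor
        · rw [Sa_succ_high]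
          refine hcomb _ ?_
          calc ‖Sa m (2^m) x + e2 (2^m : ℤ) x * Sb m s x‖
              ≤ ‖Sa m (2^m) x‖ + ‖e2 (2^m : ℤ) x * Sb m s x‖ := norm_add_le _ _
            _ = ‖Sa m (2^m) x‖ + ‖Sb m s x‖ := by rw [norm_mul, e2_norm, one_mul]
        · rw [Sb_succ_high]
          refine hcomb _ ?_
          calc ‖Sa m (2^m) x - e2 (2^m : ℤ) x * Sb m s x‖
              ≤ ‖Sa m (2^m) x‖ + ‖e2 (2^m : ℤ) x * Sb m s x‖ := norm_sub_le _ _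
            _ = ‖Sa m (2^m) x‖ + ‖Sb m s x‖ := by rw [norm_mul, e2_norm, one_mul]

end RSaux

/-- (Rudin–Shapiro type bound.) For every `n ≥ 1` there are signs
`ε_k ∈ {-1,1}`, `1 ≤ k ≤ n`, such that
`‖∑_{k=1}^n ε_k e^{2πikx}‖_{L^∞([0,1])} ≤ 5 √n`. -/
theorem signs_with_small_sup_norm (n : ℕ) (hn : 1 ≤ n) :
    ∃ ε : ℕ → ℝ,
      (∀ k ∈ Finset.Icc 1 n, ε k = 1 ∨ ε k = -1) ∧
      ∀ x ∈ Icc (0:ℝ) 1,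
        ‖∑ k ∈ Finset.Icc 1 n, (ε k : ℂ) * e2 (k : ℤ) x‖ ≤ 5 * Real.sqrt n := by
  refine ⟨fun k => (RSaux.rs n (k-1)).1, fun k _ => (RSaux.rs_mem n (k-1)).1, fun x _ => ?_⟩
  have hsum : ∑ k ∈ Finset.Icc 1 n, ((RSaux.rs n (k-1)).1 : ℂ) * e2 (k : ℤ) x
      = e2 1 x * RSaux.Sa n n x := by
    rw [← Finset.Ico_add_one_right_eq_Icc, Finset.sum_Ico_eq_sum_range]
    have hcard : n + 1 - 1 = n := by omega
    rw [hcard, RSaux.Sa, Finset.mul_sum]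
    refine Finset.sum_congr rfl fun i hi => ?_
    have hsub : 1 + i - 1 = i := by omega
    have he : e2 ((1 + i : ℕ) : ℤ) x = e2 1 x * e2 (i : ℤ) x := by
      rw [← RSaux.e2_add]; norm_num
    rw [hsub, he]; ring
  rw [hsum, norm_mul, RSaux.e2_norm, one_mul]
  exact (RSaux.main_bound n n (show n < 2^n from Nat.lt_two_pow_self).le x).1
end
end

section
/- There is an absolute constant C > 0 such that the following holds. Let γ, θ₀ ∈ (0, π/4), let A ⊂ ℝ be an interval centered at 0 with |A| ≤ |γ − θ₀|/2, and let h ∈ ℝ with |h| ≤ |γ − θ₀|/4 and such that θ + θ₀ − γ and θ + θ₀ + h − γ are nonzero and lie in (−π/4, π/4) for all θ ∈ A with |θ+θ₀−γ| ≥ |γ−θ₀|/2. Then ∫_A | log(1/|tan(θ + θ₀ − γ)|) − log(1/|tan(θ + θ₀ + h − γ)|) | dθ ≤ C · |h| · |A| / |γ − θ₀|. -/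
open MeasureTheory Real Filter Set
open scoped ENNReal Topology

noncomputable section

/-- There is an absolute constant `C > 0` such that for all
`γ, θ₀ ∈ (0, π/4)`, every interval `A = (-r, r)` centered at `0` with length
`|A| = 2r ≤ |γ - θ₀|/2`, and every `h` with `|h| ≤ |γ - θ₀|/4` such that for each
`θ ∈ A` the numbers `θ + θ₀ - γ` and `θ + θ₀ + h - γ` are nonzero, lie in
`(-π/4, π/4)`, and `|θ + θ₀ - γ| ≥ |γ - θ₀|/2`, one has
`∫_A |log(1/|tan(θ+θ₀-γ)|) - log(1/|tan(θ+θ₀+h-γ)|)| dθ ≤ C |h| |A| / |γ - θ₀|`. -/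
theorem log_tan_difference_bound :
    ∃ C : ℝ, 0 < C ∧
      ∀ (γ θ₀ r h : ℝ), γ ∈ Ioo (0:ℝ) (π/4) → θ₀ ∈ Ioo (0:ℝ) (π/4) →
        0 ≤ r → 2 * r ≤ |γ - θ₀| / 2 → |h| ≤ |γ - θ₀| / 4 →
        (∀ θ ∈ Ioo (-r) r,
          θ + θ₀ - γ ≠ 0 ∧ θ + θ₀ + h - γ ≠ 0 ∧
          θ + θ₀ - γ ∈ Ioo (-(π/4)) (π/4) ∧ θ + θ₀ + h - γ ∈ Ioo (-(π/4)) (π/4) ∧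
          |γ - θ₀| / 2 ≤ |θ + θ₀ - γ|) →
        (∫ θ in Ioo (-r) r,
            |Real.log (1 / |Real.tan (θ + θ₀ - γ)|) -
              Real.log (1 / |Real.tan (θ + θ₀ + h - γ)|)|) ≤
          C * |h| * (2 * r) / |γ - θ₀| := by
  refine ⟨4 * π, by positivity, ?_⟩
  intro γ θ₀ r h hγ hθ₀ hr hA hh hcond
  set d := |γ - θ₀| with hd
  have hd0 : 0 ≤ d := abs_nonneg _
  rcases eq_or_lt_of_le hd0 with hd0' | hdpos
  · -- degenerate case d = 0 : then r = 0 and both sides are 0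
    have hr0 : r = 0 := by nlinarith
    have hempty : Ioo (-r) r = (∅ : Set ℝ) := by
      rw [hr0]; simp
    rw [hempty]
    simp [hr0]
  -- main case : d > 0
  have gfun : ∀ t : ℝ, Real.log (1 / |Real.tan t|) = -Real.log (Real.tan t) := by
    intro t
    rw [one_div, Real.log_inv, Real.log_abs]
  have key : ∀ θ ∈ Ioo (-r) r,
      |Real.log (1 / |Real.tan (θ + θ₀ - γ)|) -
        Real.log (1 / |Real.tan (θ + θ₀ + h - γ)|)| ≤ (4 * π / d) * |h| := by
    intro θ hθ
    obtain ⟨hx0, hy0, hxI, hyI, hxd⟩ := hcond θ hθ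
    set x := θ + θ₀ - γ with hxdef
    have hyx : θ + θ₀ + h - γ = x + h := by rw [hxdef]; ring
    rw [hyx] at hy0 hyI ⊢
    set s : Set ℝ := Set.uIcc x (x + h) with hs
    -- properties of points in the segment
    have hseg : ∀ t ∈ s, d / 4 ≤ |t| ∧ |t| < π / 4 := by
      intro t ht
      rw [hs, Set.mem_uIcc] at ht
      have htx : |t - x| ≤ |h| := by
        rcases ht with ⟨h1, h2⟩ | ⟨h1, h2⟩
        · rw [abs_of_nonneg (by linarith)]
          have : h ≤ |h| := le_abs_self h
          linarith
        · rw [abs_of_nonpos (by linarith)]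
          have : -h ≤ |h| := neg_le_abs h
          linarith
      have habs : |x| - |t| ≤ |x - t| := abs_sub_abs_le_abs_sub x t
      rw [abs_sub_comm x t] at habs
      constructor
      · linarith
      · rcases ht with ⟨h1, h2⟩ | ⟨h1, h2⟩ <;>
          [exact abs_lt.2 ⟨by linarith [hxI.1], by linarith [hyI.2]⟩;
           exact abs_lt.2 ⟨by linarith [hyI.1], by linarith [hxI.2]⟩]
    have hcos : ∀ t ∈ s, (1:ℝ) / 2 ≤ Real.cos t := by
      intro t ht
      obtain ⟨_, h2⟩ := hseg t ht
      have hc : Real.cos (π / 4) ≤ Real.cos |t| :=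
        Real.cos_le_cos_of_nonneg_of_le_pi (abs_nonneg t)
          (by linarith [Real.pi_pos]) h2.le
      have hct : Real.cos |t| = Real.cos t := by
        rcases abs_cases t with ⟨h1, _⟩ | ⟨h1, _⟩
        · rw [h1]
        · rw [h1, Real.cos_neg]
      have h24 : Real.cos (π / 4) = Real.sqrt 2 / 2 := Real.cos_pi_div_four
      have hsq : (1:ℝ) ≤ Real.sqrt 2 := by
        rw [show (1:ℝ) = Real.sqrt 1 by rw [Real.sqrt_one]]
        exact Real.sqrt_le_sqrt (by norm_num)
      rw [← hct]
      linarith [hc, h24 ▸ hc]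
    have hsin : ∀ t ∈ s, d / (2 * π) ≤ |Real.sin t| := by
      intro t ht
      obtain ⟨h1, h2⟩ := hseg t ht
      have hb : 2 / π * |t| ≤ |Real.sin t| :=
        Real.mul_abs_le_abs_sin (by linarith [Real.pi_pos])
      have : 2 / π * (d / 4) ≤ 2 / π * |t| := by
        apply mul_le_mul_of_nonneg_left h1
        positivity
      have heq : 2 / π * (d / 4) = d / (2 * π) := by
        field_simp
        ring
      linarith [heq ▸ this]
    -- the derivative bound
    have hderiv : ∀ t ∈ s, HasDerivWithinAt (fun u => Real.log (Real.tan u))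
        (1 / (Real.sin t * Real.cos t)) s t := by
      intro t ht
      have hct := hcos t ht
      have hst := hsin t ht
      have hcne : Real.cos t ≠ 0 := by positivity
      have hsne : Real.sin t ≠ 0 := by
        intro hcon
        rw [hcon, abs_zero] at hst
        have : 0 < d / (2 * π) := by positivity
        linarith
      have htne : Real.tan t ≠ 0 := by
        rw [Real.tan_eq_sin_div_cos]
        exact div_ne_zero hsne hcne
      have hD : HasDerivAt (fun u => Real.log (Real.tan u))
          ((1 / Real.cos t ^ 2) / Real.tan t) t :=
        (Real.hasDerivAt_tan hcne).log htne
      have heq : (1 / Real.cos t ^ 2) / Real.tan t = 1 / (Real.sin t * Real.cos t) := by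
        rw [Real.tan_eq_sin_div_cos]
        field_simp
      rw [heq] at hD
      exact hD.hasDerivWithinAt
    have hbound : ∀ t ∈ s, ‖1 / (Real.sin t * Real.cos t)‖ ≤ 4 * π / d := by
      intro t ht
      have hct := hcos t ht
      have hst := hsin t ht
      have hprod : d / (4 * π) ≤ |Real.sin t * Real.cos t| := by
        rw [abs_mul, abs_of_nonneg (by linarith : (0:ℝ) ≤ Real.cos t)]
        calc d / (4 * π) = (d / (2 * π)) * (1 / 2) := by ring
          _ ≤ |Real.sin t| * Real.cos t := by
              apply mul_le_mul hst hct (by norm_num)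
              exact (abs_nonneg _)
      have hprodpos : 0 < |Real.sin t * Real.cos t| := by
        have : (0:ℝ) < d / (4 * π) := by positivity
        linarith
      rw [Real.norm_eq_abs, abs_div, abs_one]
      rw [div_le_div_iff₀ hprodpos hdpos]
      calc 1 * d = d := one_mul d
        _ = (4 * π) * (d / (4 * π)) := by field_simp
        _ ≤ (4 * π) * |Real.sin t * Real.cos t| := by
            apply mul_le_mul_of_nonneg_left hprod
            positivity
    -- apply the mean value inequality
    have hMVT := (convex_uIcc x (x + h)).norm_image_sub_le_of_norm_hasDerivWithin_le
      hderiv hbound (Set.left_mem_uIcc) (Set.right_mem_uIcc)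
    rw [Real.norm_eq_abs, Real.norm_eq_abs] at hMVT
    have hsimp : x + h - x = h := by ring
    rw [hsimp] at hMVT
    rw [gfun, gfun, neg_sub_neg]
    exact hMVT
  -- integrate the pointwise bound
  have hfin : volume (Ioo (-r) r) < ⊤ := measure_Ioo_lt_top
  have hInt : ‖∫ θ in Ioo (-r) r,
      |Real.log (1 / |Real.tan (θ + θ₀ - γ)|) -
        Real.log (1 / |Real.tan (θ + θ₀ + h - γ)|)|‖ ≤
      (4 * π / d * |h|) * (volume (Ioo (-r) r)).toReal := by
    apply norm_setIntegral_le_of_norm_le_const_ae' hfin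
    apply ae_of_all
    intro θ hθ
    rw [Real.norm_eq_abs, abs_abs]
    exact key θ hθ
  have hvol : (volume (Ioo (-r) r)).toReal = 2 * r := by
    rw [Real.volume_Ioo, ENNReal.toReal_ofReal (by linarith)]
    ring
  rw [hvol] at hInt
  have hle : (∫ θ in Ioo (-r) r,
      |Real.log (1 / |Real.tan (θ + θ₀ - γ)|) -
        Real.log (1 / |Real.tan (θ + θ₀ + h - γ)|)|) ≤
      ‖∫ θ in Ioo (-r) r,
        |Real.log (1 / |Real.tan (θ + θ₀ - γ)|) -
          Real.log (1 / |Real.tan (θ + θ₀ + h - γ)|)|‖ := by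
    rw [Real.norm_eq_abs]
    exact le_abs_self _
  refine hle.trans (hInt.trans_eq ?_)
  field_simp
end
end
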